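/- Consider the idealized process with n bins and m ≥ 6n balls, started at round t_0 from an arbitrary load vector y^{t_0} with Σ_i y_i^{t_0} = m. There exists n_0 such that for all n ≥ n_0 and any bin i ∈ [n] with y_i^{t_0} ≤ 2·m/n, the probability that there exists a round t_1 ∈ [t_0, t_0 + ⌈720 · m²/n²⌉] with y_i^{t_1} = 0 is at least 1/4. -/

import Mathlib

open MeasureTheory ProbabilityTheory Finset
open scoped ENNReal

/-- One round of the idealized process: one ball is removed from each non-empty bin and
exactly `n` balls are allocated, one according to each of the `n` bin choices. -/
def idealStep {n : ℕ} (y : Fin n → ℕ) (z : Fin n → Fin n) (i : Fin n) : ℕ :=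
  y i - (if 0 < y i then 1 else 0) + (Finset.univ.filter fun j : Fin n => z j = i).card

/-- The idealized process trajectory started from the load vector `y0`. -/
def ideal {n : ℕ} (y0 : Fin n → ℕ) (Z : ℕ → Fin n → Fin n) : ℕ → Fin n → ℕ
  | 0 => y0
  | t + 1 => idealStep (ideal y0 Z t) (Z t)

/-!
While bin `i` is non-empty it loses exactly one ball per round, so if it receives at most
`T - y_i` balls during `T` rounds it is empty at some round `≤ T`. The number of balls it
receives in `T` rounds counts the successes among `nT` independent trials of probability `1/n`,
so it is `Bin(nT, 1/n)`-distributed with integer mean `T`, and `T ≥ 144 y_i²` by the choice of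
the horizon. Then `P(Bin ≤ T - y_i) ≥ 1 - P(Bin > T) - y_i · P(Bin = T) ≥ 1 - 1/2 - 1/4`:
`T` is a median, because the upper tail `x ↦ P(Bin(nT, x) > T)` has derivative proportional to
`x^T (1-x)^((n-1)T-1)`, which is larger at `1/n + u` than at `1/n - u`; and `T` is the mode,
whose mass is at most `4 / (3 (L + 1))` because the `L + 1 = 6 y_i + 1` masses to its right are
each at least `3/4` of it.
-/

lemma Finset.sum_Iic_add_sum_Ioc {α M : Type*} [LinearOrder α] [LocallyFiniteOrder α]
    [LocallyFiniteOrderBot α] [AddCommMonoid M] (f : α → M) {a b : α} (h : a ≤ b) :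
    ∑ x ∈ Iic a, f x + ∑ x ∈ Ioc a b, f x = ∑ x ∈ Iic b, f x := by
  rw [← Iic_union_Ioc_eq_Iic h, sum_union (disjoint_left.2 fun x hxa hx =>
    (mem_Ioc.1 hx).1.not_ge (mem_Iic.1 hxa))]

namespace bernsteinPolynomial

open Polynomial

lemma eval_eq {R : Type*} [CommRing R] (M k : ℕ) (x : R) :
    (bernsteinPolynomial R M k).eval x = M.choose k * x ^ k * (1 - x) ^ (M - k) := by
  simp [bernsteinPolynomial]

lemma eval_nonneg (M k : ℕ) {x : ℝ} (hx₀ : 0 ≤ x) (hx₁ : x ≤ 1) :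
    0 ≤ (bernsteinPolynomial ℝ M k).eval x := by
  rw [eval_eq]
  have : 0 ≤ 1 - x := sub_nonneg.2 hx₁
  positivity

lemma eval_inv_natCast_nonneg (M k n : ℕ) : 0 ≤ (bernsteinPolynomial ℝ M k).eval (n : ℝ)⁻¹ :=
  eval_nonneg M k (by positivity) (Nat.cast_inv_le_one n)

lemma sum_Iic_eval (M : ℕ) (x : ℝ) :
    ∑ k ∈ Iic M, (bernsteinPolynomial ℝ M k).eval x = 1 := by
  rw [← Nat.range_succ_eq_Iic, ← eval_finsetSum, bernsteinPolynomial.sum, eval_one]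

lemma eval_succ_mul {R : Type*} [CommRing R] {M k : ℕ} (hk : k < M) (x : R) :
    (bernsteinPolynomial R M (k + 1)).eval x * (k + 1) * (1 - x) =
      (bernsteinPolynomial R M k).eval x * (M - k) * x := by
  obtain ⟨d, rfl⟩ : ∃ d, M = k + 1 + d := ⟨M - (k + 1), by omega⟩
  have hchoose :
      ((k + 1 + d).choose (k + 1) : R) * (k + 1) = (k + 1 + d).choose k * (d + 1) := by
    have := Nat.choose_succ_right_eq (k + 1 + d) k
    rw [show k + 1 + d - k = d + 1 by omega] at this
    exact_mod_cast congrArg (Nat.cast : ℕ → R) this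
  rw [eval_eq, eval_eq, show k + 1 + d - k = d + 1 by omega,
    show k + 1 + d - (k + 1) = d by omega]
  push_cast
  linear_combination x ^ k * x * (1 - x) ^ d * (1 - x) * hchoose

lemma eval_mul_le_eval_succ_mul {M k : ℕ} (hk : k < M) {x c : ℝ} (hx₀ : 0 ≤ x) (hx₁ : x < 1)
    (hc : c * (1 - x) ≤ (M - k) * x) :
    (bernsteinPolynomial ℝ M k).eval x * c ≤
      (bernsteinPolynomial ℝ M (k + 1)).eval x * (k + 1) := by
  have hb := eval_nonneg M k hx₀ hx₁.le
  refine le_of_mul_le_mul_right ?_ (sub_pos.2 hx₁)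
  rw [eval_succ_mul hk]
  nlinarith [mul_le_mul_of_nonneg_left hc hb]

lemma derivative_sum_Ioc {R : Type*} [CommRing R] {M T : ℕ} (hT : T ≤ M) :
    derivative (∑ k ∈ Ioc T (M + 1), bernsteinPolynomial R (M + 1) k) =
      (M + 1) * bernsteinPolynomial R M T := by
  have partial_sums : ∀ j, T ≤ j →
      derivative (∑ k ∈ Ioc T j, bernsteinPolynomial R (M + 1) k) =
        (M + 1) * (bernsteinPolynomial R M T - bernsteinPolynomial R M j) := by
    intro j hj
    induction j, hj using Nat.le_induction with
    | base => simp
    | succ j hj ih =>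
      rw [sum_Ioc_succ_top hj, derivative_add, ih, derivative_succ_aux]
      ring
  rw [partial_sums (M + 1) (by omega), eq_zero_of_lt R M.lt_succ_self, sub_zero]

end bernsteinPolynomial

lemma one_sub_mul_mul_one_add_pow_le (m : ℕ) {t : ℝ} (ht : 0 ≤ t) (hmt : m * t ≤ 1) :
    (1 - m * t) * (1 + t) ^ m ≤ (1 + m * t) * (1 - t) ^ m := by
  induction m with
  | zero => simp
  | succ m ih =>
    push_cast at hmt ⊢
    have hm : (0 : ℝ) ≤ m := m.cast_nonneg
    have ht₁ : t ≤ 1 := by nlinarith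
    have ih := ih (by nlinarith)
    -- the two sides differ by `2 m (m + 1) t ^ 3`
    have key : (1 - (m + 1) * t) * (1 + t) * (1 + m * t) ≤
        (1 + (m + 1) * t) * (1 - t) * (1 - m * t) := by
      nlinarith [mul_nonneg (mul_nonneg hm (by linarith : (0 : ℝ) ≤ m + 1)) (pow_nonneg ht 3)]
    have h₁ := mul_le_mul_of_nonneg_left ih
      (mul_nonneg (by positivity : (0 : ℝ) ≤ 1 + (m + 1) * t) (sub_nonneg.2 ht₁))
    have h₂ := mul_le_mul_of_nonneg_right key (pow_nonneg (by linarith : (0 : ℝ) ≤ 1 + t) m)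
    refine le_of_mul_le_mul_right ?_ (by positivity : (0 : ℝ) < 1 + m * t)
    calc (1 - (m + 1) * t) * (1 + t) ^ (m + 1) * (1 + m * t)
        = (1 - (m + 1) * t) * (1 + t) * (1 + m * t) * (1 + t) ^ m := by ring
      _ ≤ (1 + (m + 1) * t) * (1 - t) * ((1 - m * t) * (1 + t) ^ m) := by linarith
      _ ≤ (1 + (m + 1) * t) * (1 - t) * ((1 + m * t) * (1 - t) ^ m) := h₁
      _ = (1 + (m + 1) * t) * (1 - t) ^ (m + 1) * (1 + m * t) := by ring

lemma sub_mul_mul_add_pow_le {m : ℕ} (hm : m ≠ 0) {p u : ℝ} (hp : 0 < p) (hu₀ : 0 ≤ u)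
    (hup : u ≤ p) : (p - u) * (m * p + u) ^ m ≤ (p + u) * (m * p - u) ^ m := by
  have hm₁ : (1 : ℝ) ≤ m := Nat.one_le_cast.2 (Nat.one_le_iff_ne_zero.2 hm)
  have hmp : 0 < (m : ℝ) * p := by positivity
  set t := u / (m * p)
  have key := one_sub_mul_mul_one_add_pow_le m (t := t) (by positivity)
    (by rw [mul_div_assoc', div_le_one hmp]; nlinarith)
  have ht : m * p * t = u := mul_div_cancel₀ u hmp.ne'
  have e₁ : p - u = p * (1 - m * t) := by linear_combination ht
  have e₂ : p + u = p * (1 + m * t) := by linear_combination -ht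
  have e₃ : m * p + u = m * p * (1 + t) := by linear_combination -ht
  have e₄ : m * p - u = m * p * (1 - t) := by linear_combination ht
  calc (p - u) * (m * p + u) ^ m = p * (m * p) ^ m * ((1 - m * t) * (1 + t) ^ m) := by
        rw [e₁, e₃, mul_pow _ (1 + t)]; ring
    _ ≤ p * (m * p) ^ m * ((1 + m * t) * (1 - t) ^ m) := by gcongr
    _ = (p + u) * (m * p - u) ^ m := by rw [e₂, e₄, mul_pow _ (1 - t)]; ring

lemma sub_pow_mul_add_pow_le {m T : ℕ} (hm : m ≠ 0) (hT : T ≠ 0) {p u : ℝ} (hp : 0 < p)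
    (hu₀ : 0 ≤ u) (hup : u ≤ p) :
    (p - u) ^ T * (m * p + u) ^ (m * T - 1) ≤ (p + u) ^ T * (m * p - u) ^ (m * T - 1) := by
  have hmp : p ≤ m * p := le_mul_of_one_le_left hp.le (Nat.one_le_cast.2 (by omega))
  have hpow := pow_le_pow_left₀ (by have := sub_nonneg.2 hup; positivity)
    (sub_mul_mul_add_pow_le hm hp hu₀ hup) T
  obtain ⟨K, hK⟩ : ∃ K, m * T = K + 1 :=
    ⟨m * T - 1, by have := Nat.mul_ne_zero hm hT; omega⟩
  rw [mul_pow, mul_pow, ← pow_mul, ← pow_mul, hK, pow_succ, pow_succ] at hpow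
  rw [hK, Nat.add_sub_cancel]
  refine le_of_mul_le_mul_right ?_ (by linarith : 0 < m * p + u)
  calc (p - u) ^ T * (m * p + u) ^ K * (m * p + u)
      ≤ (p + u) ^ T * ((m * p - u) ^ K * (m * p - u)) := by linarith
    _ ≤ (p + u) ^ T * (m * p - u) ^ K * (m * p + u) := by
      rw [← mul_assoc]
      have : 0 ≤ m * p - u := by linarith
      gcongr
      linarith

lemma integral_le_integral_of_le_reflect {g : ℝ → ℝ} (hg : Continuous g) {p : ℝ} (hp : 0 ≤ p)
    (hp₁ : 2 * p ≤ 1) (hreflect : ∀ u ∈ Set.Icc 0 p, g (p - u) ≤ g (p + u))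
    (hnonneg : ∀ x ∈ Set.Ioc p 1, 0 ≤ g x) :
    ∫ x in 0..p, g x ≤ ∫ x in p..1, g x :=
  calc ∫ x in 0..p, g x = ∫ u in 0..p, g (p - u) := by
        simp [intervalIntegral.integral_comp_sub_left g p]
    _ ≤ ∫ u in 0..p, g (p + u) :=
        intervalIntegral.integral_mono_on hp ((hg.comp (by fun_prop)).intervalIntegrable _ _)
          ((hg.comp (by fun_prop)).intervalIntegrable _ _) hreflect
    _ = ∫ x in p..2 * p, g x := by simp [intervalIntegral.integral_comp_add_left g p, two_mul]
    _ ≤ ∫ x in p..1, g x :=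
        intervalIntegral.integral_mono_interval le_rfl (by linarith) hp₁
          ((ae_restrict_iff' measurableSet_Ioc).2 (.of_forall hnonneg))
          (hg.intervalIntegrable p 1)

section BinomialWithIntegerMean

open Polynomial

variable {n T : ℕ}

-- `𝔟 k = P(Bin(nT, 1/n) = k)`
local notation "𝔟" k:max => eval (n⁻¹ : ℝ) (bernsteinPolynomial ℝ (n * T) k)

lemma bernstein_eval_le_eval_mode (hn : 2 ≤ n) {k : ℕ} (hk : k ≤ T) : 𝔟 k ≤ 𝔟 T := by
  have hn' : (2 : ℝ) ≤ n := by exact_mod_cast hn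
  have step : ∀ k < T, 𝔟 k ≤ 𝔟 (k + 1) := by
    intro k hk
    have hkT : (k : ℝ) + 1 ≤ T := by exact_mod_cast hk
    have h := bernsteinPolynomial.eval_mul_le_eval_succ_mul (c := k + 1)
      (by nlinarith : k < n * T) (x := n⁻¹) (by positivity)
      (inv_lt_one_of_one_lt₀ (by linarith)) (by push_cast; field_simp; nlinarith)
    exact le_of_mul_le_mul_right h (by positivity)
  have hanti : Antitone fun d => 𝔟 (T - d) := antitone_nat_of_succ_le fun d => by
    rcases lt_or_ge d T with hd | hd
    · simpa [show T - (d + 1) + 1 = T - d by omega] using step (T - (d + 1)) (by omega)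
    · simp [show T - (d + 1) = T - d by omega]
  simpa [Nat.sub_sub_self hk] using hanti (Nat.zero_le (T - k))

lemma bernstein_eval_mode_add_mul_le (hn : 2 ≤ n) {j : ℕ} (hj : j < T) :
    𝔟 (T + j) * (T - j) ≤ 𝔟 (T + j + 1) * (T + j + 1) := by
  have hn' : (2 : ℝ) ≤ n := by exact_mod_cast hn
  have hj' : (j : ℝ) ≤ T := by exact_mod_cast hj.le
  have h := bernsteinPolynomial.eval_mul_le_eval_succ_mul (c := T - j)
    (by nlinarith : T + j < n * T) (x := n⁻¹) (by positivity)
    (inv_lt_one_of_one_lt₀ (by linarith)) (by push_cast; field_simp; nlinarith)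
  simpa using h

lemma sub_sq_mul_bernstein_eval_mode_le (hn : 2 ≤ n) {j : ℕ} (hj : j ≤ T) :
    (T - j ^ 2) * 𝔟 T ≤ T * 𝔟 (T + j) := by
  induction j with
  | zero => simp
  | succ j ih =>
    have hjT : (j : ℝ) + 1 ≤ T := by exact_mod_cast hj
    have hb := bernsteinPolynomial.eval_inv_natCast_nonneg (n * T) T n
    have ih := mul_le_mul_of_nonneg_right (ih (by omega)) (by linarith : (0 : ℝ) ≤ T - j)
    have step := mul_le_mul_of_nonneg_left
      (bernstein_eval_mode_add_mul_le (T := T) hn (j := j) (by omega))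
      (by positivity : (0 : ℝ) ≤ T)
    refine le_of_mul_le_mul_right ?_ (by positivity : (0 : ℝ) < T + j + 1)
    push_cast
    calc (T - (j + 1 : ℝ) ^ 2) * 𝔟 T * (T + j + 1) ≤ (T - (j : ℝ) ^ 2) * 𝔟 T * (T - j) := by
          -- the two sides differ by `(j ^ 3 + (j + 1) ^ 3) * 𝔟 T`
          nlinarith [mul_nonneg (by positivity : (0 : ℝ) ≤ j ^ 3 + (j + 1) ^ 3) hb]
      _ ≤ T * 𝔟 (T + j) * (T - j) := ih
      _ ≤ T * 𝔟 (T + (j + 1)) * (T + j + 1) := by rw [← add_assoc]; linarith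

lemma add_one_mul_bernstein_eval_mode_le (hn : 2 ≤ n) (hT : 0 < T) {L : ℕ} (hL : 4 * L ^ 2 ≤ T) :
    (L + 1) * 𝔟 T ≤ 4 / 3 := by
  have hT' : (0 : ℝ) < T := by exact_mod_cast hT
  have hlow : ∀ j ∈ range (L + 1), 3 / 4 * 𝔟 T ≤ 𝔟 (T + j) := by
    intro j hj
    have hjL : 4 * j ^ 2 ≤ T :=
      le_trans (by gcongr; exact Nat.lt_succ_iff.1 (mem_range.1 hj)) hL
    have hjL' : 4 * (j : ℝ) ^ 2 ≤ T := by exact_mod_cast hjL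
    have h := sub_sq_mul_bernstein_eval_mode_le hn (j := j) (by nlinarith)
    have hb := bernsteinPolynomial.eval_inv_natCast_nonneg (n * T) T n
    refine le_of_mul_le_mul_left ?_ hT'
    nlinarith
  have hsum : ∑ j ∈ range (L + 1), 𝔟 (T + j) ≤ 1 := by
    have hLT : L ≤ T := by nlinarith [Nat.le_self_pow two_ne_zero L]
    have h2T : 2 * T ≤ n * T := Nat.mul_le_mul_right T hn
    rw [← bernsteinPolynomial.sum_Iic_eval (n * T) n⁻¹,
      ← Nat.add_sub_cancel_left (n := T) (m := L + 1), ← sum_Ico_eq_sum_range (fun k => 𝔟 k)]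
    refine sum_le_sum_of_subset_of_nonneg (fun k hk => ?_)
      fun k _ _ => bernsteinPolynomial.eval_inv_natCast_nonneg _ _ _
    simp only [mem_Ico, mem_Iic] at hk ⊢
    omega
  have := card_nsmul_le_sum _ _ _ hlow
  rw [card_range, nsmul_eq_mul] at this
  push_cast at this
  linarith

lemma sum_Ioc_bernstein_eval_le_half (hn : 2 ≤ n) (hT : 0 < T) :
    ∑ k ∈ Ioc T (n * T), 𝔟 k ≤ 1 / 2 := by
  have h2T : 2 * T ≤ n * T := Nat.mul_le_mul_right T hn
  obtain ⟨M, hM⟩ : ∃ M, n * T = M + 1 := ⟨n * T - 1, by omega⟩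
  have hTM : T ≤ M := by omega
  have hMT : (n - 1) * T - 1 = M - T := by rw [Nat.sub_one_mul]; omega
  have hn' : (2 : ℝ) ≤ n := by exact_mod_cast hn
  have hp : (0 : ℝ) < (n : ℝ)⁻¹ := by positivity
  have h2p : 2 * (n : ℝ)⁻¹ ≤ 1 := by
    rw [← div_eq_mul_inv, div_le_one (by positivity)]; exact hn'
  -- `F x = P(Bin(M + 1, x) > T)`
  set F := ∑ k ∈ Ioc T (M + 1), bernsteinPolynomial ℝ (M + 1) k
  have hF : ∑ k ∈ Ioc T (n * T), 𝔟 k = F.eval (n : ℝ)⁻¹ := by rw [hM, eval_finsetSum]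
  have hF' : derivative F = (M + 1) * bernsteinPolynomial ℝ M T :=
    bernsteinPolynomial.derivative_sum_Ioc hTM
  have hFTC : ∀ a b : ℝ, ∫ x in a..b, (derivative F).eval x = F.eval b - F.eval a :=
    fun a b => intervalIntegral.integral_eq_sub_of_hasDerivAt (fun x _ => F.hasDerivAt x)
      ((derivative F).continuous.intervalIntegrable a b)
  have hF₀ : F.eval 0 = 0 := by
    simp only [F, eval_finsetSum, bernsteinPolynomial.eval_at_0]
    exact sum_eq_zero fun k hk => if_neg (by simp only [mem_Ioc] at hk; omega)
  have hF₁ : F.eval 1 = 1 := by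
    simp [F, eval_finsetSum, bernsteinPolynomial.eval_at_1, hTM]
  have hreflect : ∀ u ∈ Set.Icc 0 (n : ℝ)⁻¹,
      (derivative F).eval ((n : ℝ)⁻¹ - u) ≤ (derivative F).eval ((n : ℝ)⁻¹ + u) := by
    intro u hu
    have key := sub_pow_mul_add_pow_le (m := n - 1) (T := T) (by omega) hT.ne' hp hu.1 hu.2
    rw [hMT, Nat.cast_sub (by omega), Nat.cast_one, sub_one_mul,
      mul_inv_cancel₀ (by positivity)] at key
    simp only [hF', eval_mul, eval_add, eval_natCast, eval_one, bernsteinPolynomial.eval_eq]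
    calc _ = ((M + 1) * M.choose T) *
          (((n : ℝ)⁻¹ - u) ^ T * (1 - (n : ℝ)⁻¹ + u) ^ (M - T)) := by ring
      _ ≤ ((M + 1) * M.choose T) *
          (((n : ℝ)⁻¹ + u) ^ T * (1 - (n : ℝ)⁻¹ - u) ^ (M - T)) :=
          mul_le_mul_of_nonneg_left key (by positivity)
      _ = _ := by ring
  have hnonneg : ∀ x ∈ Set.Ioc (n : ℝ)⁻¹ 1, 0 ≤ (derivative F).eval x := fun x hx => by
    rw [hF', eval_mul]
    exact mul_nonneg (by simp; positivity)
      (bernsteinPolynomial.eval_nonneg M T (hp.le.trans hx.1.le) hx.2)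
  have := integral_le_integral_of_le_reflect (derivative F).continuous hp.le h2p hreflect
    hnonneg
  rw [hFTC, hFTC, hF₀, hF₁] at this
  linarith

lemma quarter_le_sum_Iic_bernstein_eval (hn : 2 ≤ n) (hT : 0 < T) {a : ℕ} (ha : 144 * a ^ 2 ≤ T) :
    1 / 4 ≤ ∑ k ∈ Iic (T - a), 𝔟 k := by
  have haT : a ≤ T := by nlinarith [Nat.le_self_pow two_ne_zero a]
  have hTn : T ≤ n * T := Nat.le_mul_of_pos_left T (by omega)
  have hb := bernsteinPolynomial.eval_inv_natCast_nonneg (n * T) T n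
  have hmid : ∑ k ∈ Ioc (T - a) T, 𝔟 k ≤ a * 𝔟 T := by
    have := sum_le_card_nsmul (Ioc (T - a) T) _ (𝔟 T)
      fun k hk => bernstein_eval_le_eval_mode hn (mem_Ioc.1 hk).2
    rwa [Nat.card_Ioc, Nat.sub_sub_self haT, nsmul_eq_mul] at this
  have hmode := add_one_mul_bernstein_eval_mode_le hn hT (L := 6 * a) (by nlinarith)
  have htail := sum_Ioc_bernstein_eval_le_half hn hT
  have htotal := bernsteinPolynomial.sum_Iic_eval (n * T) (n : ℝ)⁻¹
  rw [← sum_Iic_add_sum_Ioc _ hTn, ← sum_Iic_add_sum_Ioc _ (Nat.sub_le T a)] at htotal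
  push_cast at hmode
  nlinarith

end BinomialWithIntegerMean

lemma setOf_filter_eq_eq_biInter {Ω ι β : Type*} [DecidableEq ι] {X : ι → Ω → β} {B : Set β}
    [DecidablePred (· ∈ B)] {S F : Finset ι} (hF : F ⊆ S) :
    {ω | {s ∈ S | X s ω ∈ B} = F} = ⋂ s ∈ S, X s ⁻¹' (if s ∈ F then B else Bᶜ) := by
  ext ω
  simp only [Set.mem_ofPred_eq, Set.mem_iInter, Set.mem_preimage, Finset.ext_iff, mem_filter]
  constructor
  · intro h s hs
    split_ifs with hsF
    · exact ((h s).2 hsF).2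
    · exact fun hsB => hsF ((h s).1 ⟨hs, hsB⟩)
  · intro h s
    by_cases hsF : s ∈ F
    · simpa [hsF, hF hsF] using h s (hF hsF)
    · simp only [hsF, iff_false, not_and]
      intro hs
      simpa [hsF] using h s hs

section IndependentTrials

variable {Ω ι β : Type*} [MeasurableSpace Ω] {P : Measure Ω} [IsProbabilityMeasure P]
  [MeasurableSpace β] {X : ι → Ω → β} {B : Set β} [DecidablePred (· ∈ B)] {p : ℝ}

lemma measurableSet_setOf_filter_eq (hX : ∀ s, Measurable (X s)) (hB : MeasurableSet B)
    {S F : Finset ι} (hF : F ⊆ S) : MeasurableSet {ω | {s ∈ S | X s ω ∈ B} = F} := by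
  classical
  rw [setOf_filter_eq_eq_biInter hF]
  exact measurableSet_biInter S fun s _ => hX s (by split_ifs; exacts [hB, hB.compl])

lemma measureReal_setOf_filter_eq (hX : ∀ s, Measurable (X s)) (hind : iIndepFun X P)
    (hB : MeasurableSet B) (hp : ∀ s, P.real (X s ⁻¹' B) = p) {S F : Finset ι} (hF : F ⊆ S) :
    P.real {ω | {s ∈ S | X s ω ∈ B} = F} = p ^ #F * (1 - p) ^ (#S - #F) := by
  classical
  have hfactor : ∀ s ∈ S,
      (P (X s ⁻¹' if s ∈ F then B else Bᶜ)).toReal = if s ∈ F then p else 1 - p := by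
    intro s _
    split_ifs
    · exact hp s
    · rw [Set.preimage_compl, ← measureReal_def, probReal_compl_eq_one_sub (hX s hB), hp]
  rw [setOf_filter_eq_eq_biInter hF, measureReal_def,
    hind.measure_inter_preimage_eq_mul S fun s _ => by split_ifs; exacts [hB, hB.compl],
    ENNReal.toReal_prod, prod_congr rfl hfactor, prod_ite, prod_const, prod_const,
    filter_mem_eq_inter, inter_eq_right.2 hF, filter_not, filter_mem_eq_inter,
    inter_eq_right.2 hF, card_sdiff_of_subset hF]

lemma measureReal_card_filter_eq (hX : ∀ s, Measurable (X s)) (hind : iIndepFun X P)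
    (hB : MeasurableSet B) (hp : ∀ s, P.real (X s ⁻¹' B) = p) (S : Finset ι) (k : ℕ) :
    P.real {ω | #{s ∈ S | X s ω ∈ B} = k} = (bernsteinPolynomial ℝ #S k).eval p := by
  have hunion : {ω | #{s ∈ S | X s ω ∈ B} = k} =
      ⋃ F ∈ S.powersetCard k, {ω | {s ∈ S | X s ω ∈ B} = F} := by
    ext ω
    simp [mem_powersetCard, filter_subset]
  rw [hunion, measureReal_biUnion_finset
      (fun F _ F' _ hne => Set.disjoint_left.2 fun ω h h' => hne (h.symm.trans h'))
      fun F hF => measurableSet_setOf_filter_eq hX hB (mem_powersetCard.1 hF).1,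
    sum_congr rfl fun F hF =>
      measureReal_setOf_filter_eq hX hind hB hp (mem_powersetCard.1 hF).1,
    sum_congr rfl fun F hF => by rw [(mem_powersetCard.1 hF).2], sum_const, card_powersetCard,
    nsmul_eq_mul, bernsteinPolynomial.eval_eq, mul_assoc]

lemma measureReal_card_filter_le (hX : ∀ s, Measurable (X s)) (hind : iIndepFun X P)
    (hB : MeasurableSet B) (hp : ∀ s, P.real (X s ⁻¹' B) = p) (S : Finset ι) (c : ℕ) :
    P.real {ω | #{s ∈ S | X s ω ∈ B} ≤ c} =
      ∑ k ∈ Iic c, (bernsteinPolynomial ℝ #S k).eval p := by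
  have hcount : Measurable fun ω => #{s ∈ S | X s ω ∈ B} := by
    simp_rw [card_filter]
    exact Finset.measurable_sum S fun s _ =>
      Measurable.ite (hX s hB) measurable_const measurable_const
  have hunion : {ω | #{s ∈ S | X s ω ∈ B} ≤ c} =
      ⋃ k ∈ Iic c, {ω | #{s ∈ S | X s ω ∈ B} = k} := by
    ext ω
    simp
  rw [hunion, measureReal_biUnion_finset
      (fun k _ k' _ hne => Set.disjoint_left.2 fun ω h h' => hne (h.symm.trans h'))
      fun k _ => measurableSet_eq_fun hcount measurable_const]
  exact sum_congr rfl fun k _ => measureReal_card_filter_eq hX hind hB hp S k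

end IndependentTrials

section SingleBin

variable {n : ℕ} (y0 : Fin n → ℕ) (z : ℕ → Fin n → Fin n) (i : Fin n)

lemma ideal_succ_apply_of_ne_zero {t : ℕ} (h : ideal y0 z t i ≠ 0) :
    ideal y0 z (t + 1) i = ideal y0 z t i - 1 + #{j | z t j = i} := by
  simp [ideal, idealStep, Nat.pos_of_ne_zero h]

lemma ideal_apply_add_eq_of_forall_ne_zero {t : ℕ} (h : ∀ s < t, ideal y0 z s i ≠ 0) :
    ideal y0 z t i + t = y0 i + ∑ s ∈ range t, #{j | z s j = i} := by
  induction t with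
  | zero => simp [ideal]
  | succ t ih =>
    have hpos := h t t.lt_succ_self
    have hprev := ih fun s hs => h s (hs.trans t.lt_succ_self)
    rw [ideal_succ_apply_of_ne_zero y0 z i hpos, sum_range_succ]
    omega

lemma exists_ideal_apply_eq_zero_of_add_sum_le {T : ℕ}
    (h : y0 i + ∑ s ∈ range T, #{j | z s j = i} ≤ T) : ∃ t ≤ T, ideal y0 z t i = 0 := by
  by_contra! hne
  have := ideal_apply_add_eq_of_forall_ne_zero y0 z i fun s hs => hne s hs.le
  have := hne T le_rfl
  omega

end SingleBin

lemma measureReal_arrivals_le {n : ℕ} {Ω : Type*} [MeasurableSpace Ω] {P : Measure Ω}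
    [IsProbabilityMeasure P] {Z : ℕ → Fin n → Ω → Fin n} (hZ : ∀ t j, Measurable (Z t j))
    (hind : iIndepFun (fun (p : ℕ × Fin n) ω => Z p.1 p.2 ω) P) {i : Fin n}
    (hunif : ∀ t j, P {ω | Z t j ω = i} = (n : ℝ≥0∞)⁻¹) (t0 T c : ℕ) :
    P.real {ω | ∑ u ∈ range T, #{j | Z (t0 + u) j ω = i} ≤ c} =
      ∑ k ∈ Iic c, (bernsteinPolynomial ℝ (n * T) k).eval (n : ℝ)⁻¹ := by
  set S := Ico t0 (t0 + T) ×ˢ (univ : Finset (Fin n))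
  have hS : #S = n * T := by simp [S, mul_comm]
  have hcount : ∀ ω, ∑ u ∈ range T, #{j | Z (t0 + u) j ω = i} =
      #{s ∈ S | Z s.1 s.2 ω ∈ ({i} : Set (Fin n))} := fun ω => by
    rw [card_filter, sum_product, sum_Ico_eq_sum_range, Nat.add_sub_cancel_left]
    exact sum_congr rfl fun u _ => by rw [card_filter]; rfl
  have hp : ∀ s : ℕ × Fin n, P.real ((fun ω => Z s.1 s.2 ω) ⁻¹' {i}) = (n : ℝ)⁻¹ :=
    fun s => by simp [measureReal_def, Set.preimage, hunif]
  simp_rw [hcount]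
  rw [measureReal_card_filter_le (X := fun (s : ℕ × Fin n) ω => Z s.1 s.2 ω)
    (fun s => hZ s.1 s.2) hind (measurableSet_singleton i) hp, hS]

lemma mul_sq_le_ceil_of_le_div {a m n : ℕ} (h : (a : ℝ) ≤ 2 * m / n) :
    144 * a ^ 2 ≤ ⌈(720 : ℝ) * (m : ℝ) ^ 2 / (n : ℝ) ^ 2⌉₊ := by
  have : (144 * a ^ 2 : ℝ) ≤ 720 * m ^ 2 / n ^ 2 :=
    calc (144 * a ^ 2 : ℝ) ≤ 180 * (2 * m / n) ^ 2 := by gcongr; norm_num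
      _ = 720 * m ^ 2 / n ^ 2 := by ring
  rw [← Nat.cast_le (α := ℝ)]
  push_cast
  exact this.trans (Nat.le_ceil _)

/-- **Lemma 4.5.** For the idealized process with `m ≥ 6n` balls started at round `t₀`
from an arbitrary configuration, any bin `i` with `y_i^{t₀} ≤ 2m/n` reaches load `0` in
some round `t₁ ∈ [t₀, t₀ + ⌈720·m²/n²⌉]` with probability at least `1/4` (for all
sufficiently large `n`). -/
theorem ideal_reaches_empty :
    ∃ n0 : ℕ, ∀ n : ℕ, n0 ≤ n → ∀ m : ℕ, 6 * n ≤ m →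
    ∀ (Ω : Type) [inst : MeasurableSpace Ω] (P : Measure Ω) [IsProbabilityMeasure P]
      (Z : ℕ → Fin n → Ω → Fin n),
      (∀ t j, Measurable (Z t j)) →
      iIndepFun (fun (p : ℕ × Fin n) ω => Z p.1 p.2 ω) P →
      (∀ t j i, P {ω | Z t j ω = i} = (n : ℝ≥0∞)⁻¹) →
    ∀ t0 : ℕ, ∀ y0 : Fin n → ℕ, (∑ i, y0 i) = m →
    ∀ i : Fin n, (y0 i : ℝ) ≤ 2 * (m : ℝ) / n →
      P {ω | ∃ t1 : ℕ, t0 ≤ t1 ∧ t1 ≤ t0 + ⌈(720 : ℝ) * (m : ℝ) ^ 2 / (n : ℝ) ^ 2⌉₊ ∧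
            ideal y0 (fun u j => Z (t0 + u) j ω) (t1 - t0) i = 0}
        ≥ 1 / 4 := by
  refine ⟨2, fun n hn m hm Ω _ P _ Z hZ hind hunif t0 y0 _ i hload => ?_⟩
  set T := ⌈(720 : ℝ) * (m : ℝ) ^ 2 / (n : ℝ) ^ 2⌉₊
  have hm₀ : (0 : ℝ) < m := by exact_mod_cast (by omega : 0 < m)
  have hT : 0 < T := Nat.ceil_pos.2 (by positivity)
  have ha : 144 * y0 i ^ 2 ≤ T := mul_sq_le_ceil_of_le_div hload
  have haT : y0 i ≤ T := by nlinarith [Nat.le_self_pow two_ne_zero (y0 i)]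
  have hsub : {ω | ∑ u ∈ range T, #{j | Z (t0 + u) j ω = i} ≤ T - y0 i} ⊆
      {ω | ∃ t1 : ℕ, t0 ≤ t1 ∧ t1 ≤ t0 + T ∧
        ideal y0 (fun u j => Z (t0 + u) j ω) (t1 - t0) i = 0} := fun ω hω => by
    obtain ⟨t, htT, ht⟩ := exists_ideal_apply_eq_zero_of_add_sum_le y0
      (fun u j => Z (t0 + u) j ω) i (T := T) (by simp only [Set.mem_ofPred_eq] at hω; omega)
    exact ⟨t0 + t, by omega, by omega, by rwa [Nat.add_sub_cancel_left]⟩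
  calc (1 / 4 : ℝ≥0∞) = ENNReal.ofReal (1 / 4) := by simp
    _ ≤ ENNReal.ofReal (P.real _) := ENNReal.ofReal_le_ofReal <| by
        rw [measureReal_arrivals_le hZ hind (fun t j => hunif t j i)]
        exact quarter_le_sum_Iic_bernstein_eval hn hT ha
    _ = P _ := ofReal_measureReal
    _ ≤ P _ := measure_mono hsub
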